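/- arXiv:2010.01483 — 6 statements merged into one kernel-verified Lean document; each statement's English description precedes it below -/
import Mathlib

section
/- Let θ > 0, t₀ ∈ ℝ and T > t₀. Suppose ψ : ℝ → ℝ is twice differentiable at every point of [t₀, T], satisfies ψ(t) > 0 for all t ∈ [t₀, T], ψ''(t)·ψ(t) − (1+θ)·(ψ'(t))² ≥ 0 for all t ∈ [t₀, T], and ψ'(t₀) > 0. Then T < t₀ + ψ(t₀)/(θ·ψ'(t₀)). -/
/-!
Under the hypotheses ψ'' ≥ 0, so ψ' stays positive on `[t₀, T]`, and the inequality
`ψ'' ψ ≥ (1 + θ) ψ'²` says exactly that `(ψ / ψ')' = 1 - ψ ψ'' / ψ'² ≤ -θ`. Hence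
`w t = ψ t / ψ' t + θ t` is antitone, and `θ T < w T ≤ w t₀` because `ψ / ψ' > 0`.
-/

open Set

section
variable {ψ : ℝ → ℝ} {a b θ : ℝ}

lemma deriv_pos_of_deriv_deriv_nonneg
    (hψ' : ∀ t ∈ Icc a b, DifferentiableAt ℝ (deriv ψ) t)
    (hψ'' : ∀ t ∈ Icc a b, 0 ≤ deriv (deriv ψ) t) (ha : 0 < deriv ψ a) :
    ∀ t ∈ Icc a b, 0 < deriv ψ t := by
  have hmono : MonotoneOn (deriv ψ) (Icc a b) :=
    monotoneOn_of_deriv_nonneg (convex_Icc a b)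
      (fun t ht => (hψ' t ht).continuousAt.continuousWithinAt)
      (fun t ht => (hψ' t (interior_subset ht)).differentiableWithinAt)
      (fun t ht => hψ'' t (interior_subset ht))
  intro t ht
  exact ha.trans_le (hmono ⟨le_rfl, ht.1.trans ht.2⟩ ht ht.1)

lemma hasDerivAt_div_deriv_add_mul {t : ℝ} (hψ' : DifferentiableAt ℝ (deriv ψ) t)
    (hd : deriv ψ t ≠ 0) :
    HasDerivAt (fun s => ψ s / deriv ψ s + θ * s)
      (1 - ψ t * deriv (deriv ψ) t / deriv ψ t ^ 2 + θ) t := by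
  -- `deriv` is `0` at points of non-differentiability, so `hd` makes `ψ` differentiable at `t`.
  have hψ := (differentiableAt_of_deriv_ne_zero hd).hasDerivAt
  refine ((hψ.div hψ'.hasDerivAt hd).add ((hasDerivAt_id' t).const_mul θ)).congr_deriv ?_
  field_simp

lemma antitoneOn_div_deriv_add_mul
    (hψ' : ∀ t ∈ Icc a b, DifferentiableAt ℝ (deriv ψ) t)
    (hd : ∀ t ∈ Icc a b, 0 < deriv ψ t)
    (hineq : ∀ t ∈ Icc a b, 0 ≤ deriv (deriv ψ) t * ψ t - (1 + θ) * deriv ψ t ^ 2) :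
    AntitoneOn (fun s => ψ s / deriv ψ s + θ * s) (Icc a b) := by
  have hw t (ht : t ∈ Icc a b) := hasDerivAt_div_deriv_add_mul (θ := θ) (hψ' t ht) (hd t ht).ne'
  refine antitoneOn_of_hasDerivWithinAt_nonpos (convex_Icc a b)
    (fun t ht => (hw t ht).continuousAt.continuousWithinAt)
    (fun t ht => (hw t (interior_subset ht)).hasDerivWithinAt) fun t ht => ?_
  have ht := interior_subset ht
  have hsq : 0 < deriv ψ t ^ 2 := pow_pos (hd t ht) 2
  have : (1 + θ) ≤ ψ t * deriv (deriv ψ) t / deriv ψ t ^ 2 := by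
    rw [le_div_iff₀ hsq]
    linarith [hineq t ht]
  linarith

end

theorem concavity_blowup_lemma_general (θ t₀ T : ℝ) (hθ : 0 < θ) (hT : t₀ < T) (ψ : ℝ → ℝ)
    (hψ' : ∀ t ∈ Set.Icc t₀ T, DifferentiableAt ℝ (deriv ψ) t)
    (hpos : ∀ t ∈ Set.Icc t₀ T, 0 < ψ t)
    (hineq : ∀ t ∈ Set.Icc t₀ T,
      0 ≤ deriv (deriv ψ) t * ψ t - (1 + θ) * (deriv ψ t) ^ 2)
    (hψ'0 : 0 < deriv ψ t₀) :
    T < t₀ + ψ t₀ / (θ * deriv ψ t₀) := by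
  have ht₀ : t₀ ∈ Icc t₀ T := ⟨le_rfl, hT.le⟩
  have hT' : T ∈ Icc t₀ T := ⟨hT.le, le_rfl⟩
  have hψ'' : ∀ t ∈ Icc t₀ T, 0 ≤ deriv (deriv ψ) t := fun t ht =>
    nonneg_of_mul_nonneg_left (by nlinarith [hineq t ht, sq_nonneg (deriv ψ t)]) (hpos t ht)
  have hd := deriv_pos_of_deriv_deriv_nonneg hψ' hψ'' hψ'0
  have hw : ψ T / deriv ψ T + θ * T ≤ ψ t₀ / deriv ψ t₀ + θ * t₀ :=
    antitoneOn_div_deriv_add_mul hψ' hd hineq ht₀ hT' hT.le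
  have hratio : 0 < ψ T / deriv ψ T := div_pos (hpos T hT') (hd T hT')
  rw [div_mul_eq_div_div_swap, ← sub_lt_iff_lt_add', lt_div_iff₀ hθ]
  linarith

/-- Classical concavity (Levine-type) blow-up lemma. -/
theorem concavity_blowup_lemma (θ t₀ T : ℝ) (hθ : 0 < θ) (hT : t₀ < T) (ψ : ℝ → ℝ)
    (hψ : ∀ t ∈ Set.Icc t₀ T, DifferentiableAt ℝ ψ t)
    (hψ' : ∀ t ∈ Set.Icc t₀ T, DifferentiableAt ℝ (deriv ψ) t)
    (hpos : ∀ t ∈ Set.Icc t₀ T, 0 < ψ t)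
    (hineq : ∀ t ∈ Set.Icc t₀ T,
      0 ≤ deriv (deriv ψ) t * ψ t - (1 + θ) * (deriv ψ t) ^ 2)
    (hψ'0 : 0 < deriv ψ t₀) :
    T < t₀ + ψ t₀ / (θ * deriv ψ t₀) :=
  concavity_blowup_lemma_general θ t₀ T hθ hT ψ hψ' hpos hineq hψ'0
end

section
/- Let N ≥ 1 be an integer, Ω a measurable subset of ℝ^N, and let p, q, α, B be real numbers with 2 ≤ p < q, α > 0 and B > 0. Let u : ℝ^N → ℝ be continuously differentiable with compact support contained in Ω, and assume the embedding-type inequality (∫_Ω |u(x)|^{q+α} dx)^{1/(q+α)} ≤ B · (∫_Ω ‖∇u(x)‖^p dx)^{1/p}. If 0 < (∫_Ω ‖∇u(x)‖^p dx)^{1/p} ≤ r(α), then I(u) > 0. -/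
/-!
The sharp bound `log t ≤ t ^ α / (α e)` gives `∫ |u| ^ q log |u| ≤ (∫ |u| ^ (q + α)) / (α e)`.
The embedding inequality bounds `∫ |u| ^ (q + α)` by `B ^ (q + α) ‖∇u‖ₚ ^ (q + α)`, and below
the radius `r(α)` the surplus factor `B ^ (q + α) ‖∇u‖ₚ ^ (q + α - p)` is at most `α`. Hence the
logarithmic term is at most `‖∇u‖ₚ ^ p / e < ‖∇u‖ₚ ^ p`.
-/

open MeasureTheory Real

theorem Real.log_le_rpow_div_mul_exp_one {x ε : ℝ} (hx : 0 ≤ x) (hε : 0 < ε) :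
    log x ≤ x ^ ε / (ε * exp 1) := by
  rcases hx.eq_or_lt with rfl | hx
  · rw [log_zero, zero_rpow hε.ne', zero_div]
  have h := exp_one_mul_le_exp (x := log (x ^ ε))
  rw [exp_log (rpow_pos_of_pos hx ε), log_rpow hx] at h
  rw [le_div_iff₀ (by positivity)]
  linarith

theorem Real.rpow_mul_log_le {t q α : ℝ} (ht : 0 ≤ t) (hα : 0 < α) :
    t ^ q * log t ≤ t ^ (q + α) / (α * exp 1) := by
  rcases ht.eq_or_lt with rfl | ht
  · rw [log_zero, mul_zero]
    exact div_nonneg (rpow_nonneg le_rfl _) (by positivity)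
  calc t ^ q * log t ≤ t ^ q * (t ^ α / (α * exp 1)) :=
        mul_le_mul_of_nonneg_left (log_le_rpow_div_mul_exp_one ht.le hα) (rpow_nonneg ht.le _)
    _ = t ^ (q + α) / (α * exp 1) := by rw [rpow_add ht]; ring

theorem integral_rpow_mul_log_le {X : Type*} [MeasurableSpace X] {μ : Measure X} {f : X → ℝ}
    {q α : ℝ} (hα : 0 < α) (hf : Integrable (fun x => |f x| ^ (q + α)) μ) :
    ∫ x, |f x| ^ q * log |f x| ∂μ ≤ (∫ x, |f x| ^ (q + α) ∂μ) / (α * exp 1) := by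
  by_cases hI : Integrable (fun x => |f x| ^ q * log |f x|) μ
  · rw [← integral_div]
    exact integral_mono hI (hf.div_const _) fun x => rpow_mul_log_le (abs_nonneg _) hα
  · rw [integral_undef hI]
    exact div_nonneg (integral_nonneg fun x => rpow_nonneg (abs_nonneg _) _) (by positivity)

theorem le_mul_rpow_of_rpow_one_div_le_mul {A B g p r α : ℝ} (hA : 0 ≤ A) (hB : 0 < B)
    (hg : 0 < g) (hα : 0 ≤ α) (hp : 0 ≤ p) (hpr : p < r) (hAg : A ^ (1 / r) ≤ B * g)
    (hg_le : g ≤ (α / B ^ r) ^ (1 / (r - p))) :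
    A ≤ α * g ^ p := by
  have hr : 0 < r := hp.trans_lt hpr
  have hBr : 0 < B ^ r := rpow_pos_of_pos hB r
  have hA_le : A ≤ B ^ r * g ^ r := by
    have h := rpow_le_rpow (rpow_nonneg hA _) hAg hr.le
    rwa [← rpow_mul hA, one_div_mul_cancel hr.ne', rpow_one, mul_rpow hB.le hg.le] at h
  have hg_pow : g ^ (r - p) ≤ α / B ^ r := by
    have h := rpow_le_rpow hg.le hg_le (sub_pos.2 hpr).le
    rwa [← rpow_mul (by positivity), one_div_mul_cancel (sub_pos.2 hpr).ne', rpow_one] at h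
  calc A ≤ B ^ r * g ^ r := hA_le
    _ = B ^ r * g ^ (r - p) * g ^ p := by rw [mul_assoc, ← rpow_add hg, sub_add_cancel]
    _ ≤ B ^ r * (α / B ^ r) * g ^ p := by gcongr
    _ = α * g ^ p := by field_simp

theorem nehari_pos_of_grad_le_general {N : ℕ} (Ω : Set (EuclideanSpace ℝ (Fin N)))
    (p q α B : ℝ)
    (hp : 2 ≤ p) (hpq : p < q) (hα : 0 < α) (hB : 0 < B)
    (u : EuclideanSpace ℝ (Fin N) → ℝ)
    (hu : ContDiff ℝ 1 u) (hcs : HasCompactSupport u)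
    (hemb : (∫ x in Ω, |u x| ^ (q + α)) ^ (1 / (q + α)) ≤
      B * (∫ x in Ω, ‖fderiv ℝ u x‖ ^ p) ^ (1 / p))
    (hpos : 0 < (∫ x in Ω, ‖fderiv ℝ u x‖ ^ p) ^ (1 / p))
    (hle : (∫ x in Ω, ‖fderiv ℝ u x‖ ^ p) ^ (1 / p) ≤
      (α / B ^ (q + α)) ^ (1 / (q + α - p))) :
    0 < (∫ x in Ω, ‖fderiv ℝ u x‖ ^ p) - ∫ x in Ω, |u x| ^ q * Real.log |u x| := by
  set G := ∫ x in Ω, ‖fderiv ℝ u x‖ ^ p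
  have hp0 : 0 < p := by linarith
  have hqα : 0 < q + α := by linarith
  have hG : 0 < G := by
    refine (integral_nonneg fun x => rpow_nonneg (norm_nonneg _) _).lt_of_ne' fun hG0 : G = 0 => ?_
    rw [hG0, zero_rpow (one_div_pos.2 hp0).ne'] at hpos
    exact hpos.false
  have hint : IntegrableOn (fun x => |u x| ^ (q + α)) Ω :=
    ((hu.continuous.abs.rpow_const fun _ => Or.inr hqα.le).integrable_of_hasCompactSupport
      (hcs.abs.comp_left (g := (· ^ (q + α))) (zero_rpow hqα.ne'))).integrableOn
  have hA : ∫ x in Ω, |u x| ^ (q + α) ≤ α * G := by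
    have h := le_mul_rpow_of_rpow_one_div_le_mul
      (integral_nonneg fun x => rpow_nonneg (abs_nonneg _) _) hB hpos hα.le hp0.le
      (by linarith) hemb hle
    rwa [← rpow_mul hG.le, one_div_mul_cancel hp0.ne', rpow_one] at h
  refine sub_pos.2 ?_
  calc ∫ x in Ω, |u x| ^ q * log |u x|
      ≤ (∫ x in Ω, |u x| ^ (q + α)) / (α * exp 1) := integral_rpow_mul_log_le hα hint
    _ ≤ α * G / (α * exp 1) := by gcongr
    _ = G / exp 1 := by field_simp
    _ < G := div_lt_self hG (one_lt_exp_iff.2 one_pos)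

theorem nehari_pos_of_grad_le {N : ℕ} (hN : 1 ≤ N) (Ω : Set (EuclideanSpace ℝ (Fin N)))
    (hΩ : MeasurableSet Ω) (p q α B : ℝ)
    (hp : 2 ≤ p) (hpq : p < q) (hα : 0 < α) (hB : 0 < B)
    (u : EuclideanSpace ℝ (Fin N) → ℝ)
    (hu : ContDiff ℝ 1 u) (hcs : HasCompactSupport u) (hsupp : tsupport u ⊆ Ω)
    (hemb : (∫ x in Ω, |u x| ^ (q + α)) ^ (1 / (q + α)) ≤
      B * (∫ x in Ω, ‖fderiv ℝ u x‖ ^ p) ^ (1 / p))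
    (hpos : 0 < (∫ x in Ω, ‖fderiv ℝ u x‖ ^ p) ^ (1 / p))
    (hle : (∫ x in Ω, ‖fderiv ℝ u x‖ ^ p) ^ (1 / p) ≤
      (α / B ^ (q + α)) ^ (1 / (q + α - p))) :
    0 < (∫ x in Ω, ‖fderiv ℝ u x‖ ^ p) - ∫ x in Ω, |u x| ^ q * Real.log |u x| :=
  nehari_pos_of_grad_le_general Ω p q α B hp hpq hα hB u hu hcs hemb hpos hle
end

section
/- Let N ≥ 1 be an integer, Ω a measurable subset of ℝ^N, and let p, q, α, B be real numbers with 2 ≤ p < q, α > 0 and B > 0. Let u : ℝ^N → ℝ be continuously differentiable with compact support contained in Ω, and assume the embedding-type inequality (∫_Ω |u(x)|^{q+α} dx)^{1/(q+α)} ≤ B · (∫_Ω ‖∇u(x)‖^p dx)^{1/p}. If ∫_Ω ‖∇u(x)‖^p dx > 0 and I(u) ≤ 0, then (∫_Ω ‖∇u(x)‖^p dx)^{1/p} > r(α). -/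
/-!
Write `D = ∫ ‖∇u‖ ^ p = R ^ p`. The pointwise inequality `α t ^ q log t ≤ t ^ (q + α) - t ^ q`
(from `log s ≤ s - 1` at `s = t ^ α`) integrates to `α ∫ |u| ^ q log |u| ≤ ∫ |u| ^ (q + α) - ∫ |u| ^ q`,
and `∫ |u| ^ q > 0` because `u ≠ 0`. With `I(u) ≤ 0` and the embedding inequality this gives
`α R ^ p < ∫ |u| ^ (q + α) ≤ B ^ (q + α) R ^ (q + α)`, i.e. `α / B ^ (q + α) < R ^ (q + α - p)`.
-/

open MeasureTheory

namespace Real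

lemma rpow_mul_log_le_s5 {t q α : ℝ} (ht : 0 ≤ t) (hq : 0 < q) (hα : 0 < α) :
    α * (t ^ q * log t) ≤ t ^ (q + α) - t ^ q := by
  rcases ht.eq_or_lt with rfl | ht
  · simp [zero_rpow hq.ne', zero_rpow (add_pos hq hα).ne']
  have hlog : α * log t ≤ t ^ α - 1 := by
    simpa [log_rpow ht] using log_le_sub_one_of_pos (rpow_pos_of_pos ht α)
  calc α * (t ^ q * log t) = t ^ q * (α * log t) := by ring
    _ ≤ t ^ q * (t ^ α - 1) := by gcongr
    _ = t ^ (q + α) - t ^ q := by rw [rpow_add ht]; ring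

lemma continuous_abs_rpow_mul_log {q : ℝ} (hq : 0 < q) :
    Continuous fun t : ℝ ↦ |t| ^ q * log |t| := by
  -- `x * log x` is continuous at `0`, while `log` alone is not
  have h : (fun t : ℝ ↦ |t| ^ q * log |t|) = fun t ↦ q⁻¹ * (|t| ^ q * log (|t| ^ q)) := by
    funext t
    rcases eq_or_ne t 0 with rfl | ht
    · simp [zero_rpow hq.ne']
    · rw [log_rpow (abs_pos.2 ht)]
      field_simp
  rw [h]
  exact continuous_const.mul
    (continuous_mul_log.comp (continuous_abs.rpow_const fun _ ↦ Or.inr hq.le))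

lemma lt_of_mul_rpow_lt_mul_rpow {a b R p s : ℝ} (ha : 0 ≤ a) (hb : 0 < b) (hR : 0 < R)
    (hps : p < s) (h : a * R ^ p < b * R ^ s) : (a / b) ^ (1 / (s - p)) < R := by
  have hsp : 0 < s - p := sub_pos.2 hps
  have hab : a / b < R ^ (s - p) := by
    rw [div_lt_iff₀' hb]
    refine lt_of_mul_lt_mul_right ?_ (rpow_nonneg hR.le p)
    rwa [mul_assoc, ← rpow_add hR, sub_add_cancel]
  rw [one_div, rpow_inv_lt_iff_of_pos (div_nonneg ha hb.le) hR.le hsp]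
  exact hab

end Real

open Real

section AbsRpow

variable {X : Type*} [TopologicalSpace X] [MeasurableSpace X] [OpensMeasurableSpace X]
  {μ : Measure X} [IsFiniteMeasureOnCompacts μ] {u : X → ℝ}

lemma Continuous.integrable_abs_rpow (hu : Continuous u) (hcs : HasCompactSupport u) {r : ℝ}
    (hr : 0 < r) : Integrable (fun x ↦ |u x| ^ r) μ :=
  (hu.abs.rpow_const fun _ ↦ Or.inr hr.le).integrable_of_hasCompactSupport
    (hcs.comp_left (g := fun t : ℝ ↦ |t| ^ r) (by simp [zero_rpow hr.ne']))

lemma Continuous.integrable_abs_rpow_mul_log (hu : Continuous u) (hcs : HasCompactSupport u)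
    {q : ℝ} (hq : 0 < q) : Integrable (fun x ↦ |u x| ^ q * Real.log |u x|) μ :=
  ((continuous_abs_rpow_mul_log hq).comp hu).integrable_of_hasCompactSupport
    (hcs.comp_left (g := fun t : ℝ ↦ |t| ^ q * Real.log |t|) (by simp [zero_rpow hq.ne']))

lemma mul_setIntegral_abs_rpow_mul_log_le (hu : Continuous u) (hcs : HasCompactSupport u)
    (s : Set X) {q α : ℝ} (hq : 0 < q) (hα : 0 < α) :
    α * ∫ x in s, |u x| ^ q * log |u x| ∂μ ≤
      (∫ x in s, |u x| ^ (q + α) ∂μ) - ∫ x in s, |u x| ^ q ∂μ := by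
  have hqα : 0 < q + α := add_pos hq hα
  rw [← integral_const_mul, ← integral_sub (hu.integrable_abs_rpow hcs hqα).integrableOn
    (hu.integrable_abs_rpow hcs hq).integrableOn]
  exact setIntegral_mono ((hu.integrable_abs_rpow_mul_log hcs hq).integrableOn.const_mul α)
    ((hu.integrable_abs_rpow hcs hqα).integrableOn.sub (hu.integrable_abs_rpow hcs hq).integrableOn)
    fun x ↦ rpow_mul_log_le_s5 (abs_nonneg (u x)) hq hα

lemma setIntegral_abs_rpow_pos [μ.IsOpenPosMeasure] (hu : Continuous u)
    (hcs : HasCompactSupport u) {s : Set X} (hsupp : Function.support u ⊆ s) (hne : u ≠ 0)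
    {r : ℝ} (hr : 0 < r) : 0 < ∫ x in s, |u x| ^ r ∂μ := by
  obtain ⟨x, hx⟩ := Function.ne_iff.1 hne
  rw [setIntegral_eq_integral_of_forall_compl_eq_zero fun y hy ↦ by
    simp [Function.notMem_support.1 (mt (@hsupp y) hy), zero_rpow hr.ne']]
  exact (hu.abs.rpow_const fun _ ↦ Or.inr hr.le).integral_pos_of_hasCompactSupport_nonneg_nonzero
    (hcs.comp_left (g := fun t : ℝ ↦ |t| ^ r) (by simp [zero_rpow hr.ne']))
    (fun y ↦ by positivity) (x := x) (rpow_pos_of_pos (abs_pos.2 hx) r).ne'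

end AbsRpow

theorem grad_gt_of_nehari_nonpos_general {N : ℕ} (Ω : Set (EuclideanSpace ℝ (Fin N)))
    (p q α B : ℝ)
    (hp : 2 ≤ p) (hpq : p < q) (hα : 0 < α) (hB : 0 < B)
    (u : EuclideanSpace ℝ (Fin N) → ℝ)
    (hu : ContDiff ℝ 1 u) (hcs : HasCompactSupport u) (hsupp : tsupport u ⊆ Ω)
    (hemb : (∫ x in Ω, |u x| ^ (q + α)) ^ (1 / (q + α)) ≤
      B * (∫ x in Ω, ‖fderiv ℝ u x‖ ^ p) ^ (1 / p))
    (hgrad : 0 < ∫ x in Ω, ‖fderiv ℝ u x‖ ^ p)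
    (hI : (∫ x in Ω, ‖fderiv ℝ u x‖ ^ p) - (∫ x in Ω, |u x| ^ q * Real.log |u x|) ≤ 0) :
    (α / B ^ (q + α)) ^ (1 / (q + α - p)) <
      (∫ x in Ω, ‖fderiv ℝ u x‖ ^ p) ^ (1 / p) := by
  set D := ∫ x in Ω, ‖fderiv ℝ u x‖ ^ p
  have hp₀ : 0 < p := by linarith
  have hq : 0 < q := by linarith
  have hne : u ≠ 0 := by
    rintro rfl
    simp [D, zero_rpow hp₀.ne'] at hgrad
  have hK := setIntegral_abs_rpow_pos (μ := volume) hu.continuous hcs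
    ((subset_tsupport u).trans hsupp) hne hq
  have hL := mul_setIntegral_abs_rpow_mul_log_le (μ := volume) hu.continuous hcs Ω hq hα
  have hJ : ∫ x in Ω, |u x| ^ (q + α) ≤ (B * D ^ (1 / p)) ^ (q + α) := by
    rw [one_div] at hemb
    exact (rpow_inv_le_iff_of_pos (integral_nonneg fun x ↦ by positivity) (by positivity)
      (by positivity)).1 hemb
  refine lt_of_mul_rpow_lt_mul_rpow hα.le (by positivity) (by positivity) (by linarith) ?_
  calc α * (D ^ (1 / p)) ^ p = α * D := by rw [one_div, rpow_inv_rpow hgrad.le hp₀.ne']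
    _ ≤ α * ∫ x in Ω, |u x| ^ q * log |u x| := by gcongr; linarith
    _ ≤ (∫ x in Ω, |u x| ^ (q + α)) - ∫ x in Ω, |u x| ^ q := hL
    _ < ∫ x in Ω, |u x| ^ (q + α) := sub_lt_self _ hK
    _ ≤ (B * D ^ (1 / p)) ^ (q + α) := hJ
    _ = B ^ (q + α) * (D ^ (1 / p)) ^ (q + α) := mul_rpow hB.le (by positivity)

theorem grad_gt_of_nehari_nonpos {N : ℕ} (hN : 1 ≤ N) (Ω : Set (EuclideanSpace ℝ (Fin N)))
    (hΩ : MeasurableSet Ω) (p q α B : ℝ)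
    (hp : 2 ≤ p) (hpq : p < q) (hα : 0 < α) (hB : 0 < B)
    (u : EuclideanSpace ℝ (Fin N) → ℝ)
    (hu : ContDiff ℝ 1 u) (hcs : HasCompactSupport u) (hsupp : tsupport u ⊆ Ω)
    (hemb : (∫ x in Ω, |u x| ^ (q + α)) ^ (1 / (q + α)) ≤
      B * (∫ x in Ω, ‖fderiv ℝ u x‖ ^ p) ^ (1 / p))
    (hgrad : 0 < ∫ x in Ω, ‖fderiv ℝ u x‖ ^ p)
    (hI : (∫ x in Ω, ‖fderiv ℝ u x‖ ^ p) - (∫ x in Ω, |u x| ^ q * Real.log |u x|) ≤ 0) :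
    (α / B ^ (q + α)) ^ (1 / (q + α - p)) <
      (∫ x in Ω, ‖fderiv ℝ u x‖ ^ p) ^ (1 / p) :=
  grad_gt_of_nehari_nonpos_general Ω p q α B hp hpq hα hB u hu hcs hsupp hemb hgrad hI
end

section
/- Let q > 2 be a real number and T > 0. Suppose L, K : ℝ → ℝ are differentiable at every point of [0, T) and satisfy, for all t ∈ [0, T): L(t) > 0, K'(t) ≥ 0, L'(t) ≥ q·K(t), and L(t)·K'(t) ≥ (1/2)·(L'(t))². If moreover K(0) > 0, then T ≤ 2·L(0)/(q·(q−2)·K(0)). -/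
/-!
Since `L K' ≥ L'²/2 ≥ 0`, `K` is nondecreasing, so `K ≥ K(0) > 0` and `L' ≥ qK > 0`; then
`L K' ≥ L'²/2 ≥ (q/2) K L'`, which says exactly that `K / L^{q/2}` is nondecreasing. Hence
`L' ≥ a L^{q/2}` with `a = q K(0) / L(0)^{q/2}`, and a positive solution of this differential
inequality with `q/2 > 1` cannot survive past time `L(0) / (a (q/2 - 1) L(0)^{q/2})`: the
function `L^{1-q/2} + a (q/2 - 1) t` is nonincreasing and its first term is positive.
-/

open Set

theorem monotoneOn_of_hasDerivAt_nonneg {D : Set ℝ} (hD : Convex ℝ D) {f f' : ℝ → ℝ}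
    (hf : ∀ x ∈ D, HasDerivAt f (f' x) x) (hf' : ∀ x ∈ D, 0 ≤ f' x) : MonotoneOn f D :=
  monotoneOn_of_hasDerivWithinAt_nonneg hD
    (fun x hx => (hf x hx).continuousAt.continuousWithinAt)
    (fun x hx => (hf x (interior_subset hx)).hasDerivWithinAt)
    (fun x hx => hf' x (interior_subset hx))

theorem antitoneOn_of_hasDerivAt_nonpos {D : Set ℝ} (hD : Convex ℝ D) {f f' : ℝ → ℝ}
    (hf : ∀ x ∈ D, HasDerivAt f (f' x) x) (hf' : ∀ x ∈ D, f' x ≤ 0) : AntitoneOn f D :=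
  antitoneOn_of_hasDerivWithinAt_nonpos hD
    (fun x hx => (hf x hx).continuousAt.continuousWithinAt)
    (fun x hx => (hf x (interior_subset hx)).hasDerivWithinAt)
    (fun x hx => hf' x (interior_subset hx))

theorem monotoneOn_div_rpow {D : Set ℝ} (hD : Convex ℝ D) {K L : ℝ → ℝ} {s : ℝ}
    (hK : ∀ t ∈ D, DifferentiableAt ℝ K t) (hL : ∀ t ∈ D, DifferentiableAt ℝ L t)
    (hpos : ∀ t ∈ D, 0 < L t) (hKL : ∀ t ∈ D, s * K t * deriv L t ≤ L t * deriv K t) :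
    MonotoneOn (fun t => K t / L t ^ s) D := by
  refine monotoneOn_of_hasDerivAt_nonneg hD
    (fun t ht => (hK t ht).hasDerivAt.div
      ((hL t ht).hasDerivAt.rpow_const (Or.inl (hpos t ht).ne'))
      (Real.rpow_pos_of_pos (hpos t ht) s).ne') fun t ht => ?_
  have hLt := hpos t ht
  have hsplit : L t ^ s = L t * L t ^ (s - 1) := by
    rw [Real.rpow_sub hLt, Real.rpow_one, mul_div_cancel₀ _ hLt.ne']
  have hnum : deriv K t * L t ^ s - K t * (deriv L t * s * L t ^ (s - 1))
      = L t ^ (s - 1) * (L t * deriv K t - s * K t * deriv L t) := by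
    rw [hsplit]; ring
  rw [hnum]
  have := hKL t ht
  positivity

theorem le_of_deriv_ge_mul_rpow {L : ℝ → ℝ} {a p T : ℝ} (ha : 0 < a) (hp : 1 < p) (hT : 0 < T)
    (hL : ∀ t ∈ Ico 0 T, DifferentiableAt ℝ L t) (hpos : ∀ t ∈ Ico 0 T, 0 < L t)
    (hL' : ∀ t ∈ Ico 0 T, a * L t ^ p ≤ deriv L t) :
    T ≤ L 0 / (a * (p - 1) * L 0 ^ p) := by
  have h0 : (0 : ℝ) ∈ Ico 0 T := ⟨le_rfl, hT⟩
  have hφ : AntitoneOn (fun t => L t ^ (1 - p) + a * (p - 1) * t) (Ico 0 T) := by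
    refine antitoneOn_of_hasDerivAt_nonpos (convex_Ico 0 T)
      (fun t ht => ((hL t ht).hasDerivAt.rpow_const (Or.inl (hpos t ht).ne')).add
        ((hasDerivAt_id t).const_mul (a * (p - 1)))) fun t ht => ?_
    have hLp := Real.rpow_pos_of_pos (hpos t ht) p
    have hslope : a ≤ deriv L t / L t ^ p := (le_div_iff₀ hLp).2 (hL' t ht)
    have hexp : L t ^ (1 - p - 1) = (L t ^ p)⁻¹ := by
      rw [show 1 - p - 1 = -p by ring, Real.rpow_neg (hpos t ht).le]
    rw [hexp, ← div_eq_mul_inv,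
      show deriv L t * (1 - p) / L t ^ p + a * (p - 1) * 1
        = (p - 1) * (a - deriv L t / L t ^ p) by ring]
    exact mul_nonpos_of_nonneg_of_nonpos (by linarith) (by linarith)
  have hbound : ∀ t ∈ Ico 0 T, t < L 0 / (a * (p - 1) * L 0 ^ p) := by
    intro t ht
    have hdecay : L t ^ (1 - p) + a * (p - 1) * t ≤ L 0 ^ (1 - p) + a * (p - 1) * 0 :=
      hφ h0 ht ht.1
    have hL0p := Real.rpow_pos_of_pos (hpos 0 h0) p
    have hlin : a * (p - 1) * t < L 0 / L 0 ^ p := by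
      have hsplit : L 0 / L 0 ^ p = L 0 ^ (1 - p) := by
        rw [Real.rpow_sub (hpos 0 h0), Real.rpow_one]
      rw [hsplit]
      linarith [Real.rpow_pos_of_pos (hpos t ht) (1 - p)]
    rw [lt_div_iff₀ hL0p] at hlin
    rw [lt_div_iff₀ (mul_pos (mul_pos ha (sub_pos.2 hp)) hL0p)]
    linarith
  by_contra! hTB
  exact lt_irrefl _ (hbound _ ⟨(hbound 0 h0).le, hTB⟩)

theorem blowup_negative_energy_core_general (q T : ℝ) (hq : 2 < q) (hT : 0 < T) (L K : ℝ → ℝ)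
    (hL : ∀ t ∈ Set.Ico (0 : ℝ) T, DifferentiableAt ℝ L t)
    (hK : ∀ t ∈ Set.Ico (0 : ℝ) T, DifferentiableAt ℝ K t)
    (hLpos : ∀ t ∈ Set.Ico (0 : ℝ) T, 0 < L t)
    (hL' : ∀ t ∈ Set.Ico (0 : ℝ) T, q * K t ≤ deriv L t)
    (hLK : ∀ t ∈ Set.Ico (0 : ℝ) T, (1 / 2) * (deriv L t) ^ 2 ≤ L t * deriv K t)
    (hK0 : 0 < K 0) :
    T ≤ 2 * L 0 / (q * (q - 2) * K 0) := by
  have h0 : (0 : ℝ) ∈ Ico 0 T := ⟨le_rfl, hT⟩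
  have hK' : ∀ t ∈ Ico 0 T, 0 ≤ deriv K t := fun t ht =>
    nonneg_of_mul_nonneg_right ((by positivity : (0 : ℝ) ≤ 1 / 2 * deriv L t ^ 2).trans (hLK t ht))
      (hLpos t ht)
  have hKpos : ∀ t ∈ Ico 0 T, 0 < K t := fun t ht =>
    hK0.trans_le <| monotoneOn_of_hasDerivAt_nonneg (convex_Ico 0 T)
      (fun t ht => (hK t ht).hasDerivAt) hK' h0 ht ht.1
  have hquot : MonotoneOn (fun t => K t / L t ^ (q / 2)) (Ico 0 T) := by
    refine monotoneOn_div_rpow (convex_Ico 0 T) hK hL hLpos fun t ht => ?_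
    have hqK : 0 ≤ q * K t := mul_nonneg (by linarith) (hKpos t ht).le
    have := mul_le_mul_of_nonneg_right (hL' t ht) (hqK.trans (hL' t ht))
    linarith [hLK t ht]
  have hL0s := Real.rpow_pos_of_pos (hLpos 0 h0) (q / 2)
  have hgrowth : ∀ t ∈ Ico 0 T, q * K 0 / L 0 ^ (q / 2) * L t ^ (q / 2) ≤ deriv L t := by
    intro t ht
    have hKt := (le_div_iff₀ (Real.rpow_pos_of_pos (hLpos t ht) (q / 2))).1 (hquot h0 ht ht.1)
    rw [mul_div_assoc, mul_assoc]
    linarith [mul_le_mul_of_nonneg_left hKt (by linarith : (0 : ℝ) ≤ q), hL' t ht]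
  calc T ≤ L 0 / (q * K 0 / L 0 ^ (q / 2) * (q / 2 - 1) * L 0 ^ (q / 2)) :=
        le_of_deriv_ge_mul_rpow (by positivity) (by linarith) hT hL hLpos hgrowth
    _ = 2 * L 0 / (q * (q - 2) * K 0) := by field_simp

theorem blowup_negative_energy_core (q T : ℝ) (hq : 2 < q) (hT : 0 < T) (L K : ℝ → ℝ)
    (hL : ∀ t ∈ Set.Ico (0 : ℝ) T, DifferentiableAt ℝ L t)
    (hK : ∀ t ∈ Set.Ico (0 : ℝ) T, DifferentiableAt ℝ K t)
    (hLpos : ∀ t ∈ Set.Ico (0 : ℝ) T, 0 < L t)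
    (hK' : ∀ t ∈ Set.Ico (0 : ℝ) T, 0 ≤ deriv K t)
    (hL' : ∀ t ∈ Set.Ico (0 : ℝ) T, q * K t ≤ deriv L t)
    (hLK : ∀ t ∈ Set.Ico (0 : ℝ) T, (1 / 2) * (deriv L t) ^ 2 ≤ L t * deriv K t)
    (hK0 : 0 < K 0) :
    T ≤ 2 * L 0 / (q * (q - 2) * K 0) :=
  blowup_negative_energy_core_general q T hq hT L K hL hK hLpos hL' hLK hK0
end

section
/- Let q > 2, c > 0 and T > 0 be real numbers. Suppose L : ℝ → ℝ is differentiable at every point of [0, T) and satisfies L(t) > 0 and L'(t) ≥ c·L(t)^{q/2} for all t ∈ [0, T). Then T ≤ (2/((q−2)·c)) · L(0)^{(2−q)/2}. -/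
/-!
For `a ≥ 1` the differential inequality `c · L^a ≤ L'` says exactly that
`L^(1-a) + (a - 1) c t` is nonincreasing. Since `L^(1-a) > 0`, this gives
`(a - 1) c t < L(0)^(1-a)` on the whole interval of existence, which bounds its length.
Here `a = q/2`.
-/

open Set

theorem antitoneOn_rpow_one_sub_add_mul_of_mul_rpow_le_deriv {a c : ℝ} {L : ℝ → ℝ}
    {s : Set ℝ} (hs : Convex ℝ s) (ha : 1 ≤ a)
    (hL : ∀ t ∈ s, DifferentiableAt ℝ L t) (hLpos : ∀ t ∈ s, 0 < L t)
    (hL' : ∀ t ∈ interior s, c * L t ^ a ≤ deriv L t) :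
    AntitoneOn (fun t => L t ^ (1 - a) + (a - 1) * c * t) s := by
  have hderiv : ∀ t ∈ s, HasDerivAt (fun t => L t ^ (1 - a) + (a - 1) * c * t)
      ((1 - a) * (deriv L t * L t ^ (-a) - c)) t := by
    intro t ht
    have hpow := (hL t ht).hasDerivAt.rpow_const (p := 1 - a) (Or.inl (hLpos t ht).ne')
    refine (hpow.add ((hasDerivAt_id t).const_mul ((a - 1) * c))).congr_deriv ?_
    rw [sub_sub_cancel_left]
    ring
  refine antitoneOn_of_deriv_nonpos hs
    (fun t ht => (hderiv t ht).continuousAt.continuousWithinAt)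
    (fun t ht => (hderiv t (interior_subset ht)).differentiableAt.differentiableWithinAt)
    fun t ht => ?_
  have hLt := hLpos t (interior_subset ht)
  have hc : c ≤ deriv L t * L t ^ (-a) := by
    calc c = c * L t ^ a * L t ^ (-a) := by
          rw [mul_assoc, ← Real.rpow_add hLt, add_neg_cancel, Real.rpow_zero, mul_one]
      _ ≤ deriv L t * L t ^ (-a) := by
          gcongr
          exact hL' t ht
  rw [(hderiv t (interior_subset ht)).deriv]
  exact mul_nonpos_of_nonpos_of_nonneg (by linarith) (by linarith)

theorem le_div_of_forall_mem_Ico_mul_lt {k B T : ℝ} (hk : 0 < k) (hT : 0 < T)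
    (h : ∀ t ∈ Ico 0 T, k * t < B) : T ≤ B / k := by
  by_contra! hlt
  have hB : 0 < B := by simpa using h 0 ⟨le_rfl, hT⟩
  have := h (B / k) ⟨by positivity, hlt⟩
  rw [mul_div_cancel₀ B hk.ne'] at this
  exact lt_irrefl B this

theorem blowup_time_upper_bound (q c T : ℝ) (hq : 2 < q) (hc : 0 < c) (hT : 0 < T)
    (L : ℝ → ℝ)
    (hL : ∀ t ∈ Set.Ico (0 : ℝ) T, DifferentiableAt ℝ L t)
    (hLpos : ∀ t ∈ Set.Ico (0 : ℝ) T, 0 < L t)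
    (hL' : ∀ t ∈ Set.Ico (0 : ℝ) T, c * L t ^ (q / 2) ≤ deriv L t) :
    T ≤ (2 / ((q - 2) * c)) * L 0 ^ ((2 - q) / 2) := by
  have hk : 0 < (q / 2 - 1) * c := mul_pos (by linarith) hc
  have hanti := antitoneOn_rpow_one_sub_add_mul_of_mul_rpow_le_deriv (convex_Ico 0 T)
    (by linarith) hL hLpos fun t ht => hL' t (interior_subset ht)
  have hbound : ∀ t ∈ Ico 0 T, (q / 2 - 1) * c * t < L 0 ^ (1 - q / 2) := by
    intro t ht
    have hmono := hanti ⟨le_rfl, hT⟩ ht ht.1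
    have hpos := Real.rpow_pos_of_pos (hLpos t ht) (1 - q / 2)
    simp only [mul_zero, add_zero] at hmono
    linarith
  calc T ≤ L 0 ^ (1 - q / 2) / ((q / 2 - 1) * c) := le_div_of_forall_mem_Ico_mul_lt hk hT hbound
    _ = _ := by
      rw [show 1 - q / 2 = (2 - q) / 2 by ring]
      field_simp
end

section
/- Let (Ω, μ) be a measure space with μ(Ω) < ∞, let q > 1 and m > 0 be real numbers, and let u : Ω → ℝ be measurable with x ↦ |u(x)|^{(q−1+m)·q/(q−1)} integrable on Ω. Then the function x ↦ ( |u(x)|^{q−1} · |ln|u(x)|| )^{q/(q−1)} (defined to be 0 where u(x) = 0) is integrable on Ω, and ∫_Ω ( |u(x)|^{q−1} · |ln|u(x)|| )^{q/(q−1)} dμ ≤ (e·m)^{−q/(q−1)} · ∫_Ω |u(x)|^{(q−1+m)·q/(q−1)} dμ + (e·(q−1))^{−q/(q−1)} · μ(Ω). -/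
/-!
Split according to whether `|u| ≥ 1` or `|u| ≤ 1`. The elementary inequality `e · log t ≤ t`,
applied to `t = b ^ s`, gives `log b ≤ b ^ s / (e s)`. For `a ≥ 1` this yields
`a ^ (q - 1) log a ≤ a ^ (q - 1 + m) / (e m)`, and for `a ≤ 1`, applied to `b = a⁻¹`, it yields
`a ^ (q - 1) |log a| ≤ 1 / (e (q - 1))`. Raising to the power `q / (q - 1)` and integrating the
resulting pointwise bound over the finite measure space gives the estimate.
-/

open MeasureTheory

namespace Real

lemma log_le_rpow_div_exp_one_mul {b s : ℝ} (hb : 0 ≤ b) (hs : 0 < s) :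
    log b ≤ b ^ s / (exp 1 * s) := by
  rcases hb.eq_or_lt with rfl | hb
  · rw [log_zero, zero_rpow hs.ne', zero_div]
  have h : exp 1 * log (b ^ s) ≤ b ^ s := by
    simpa [exp_log (rpow_pos_of_pos hb s)] using exp_one_mul_le_exp (x := log (b ^ s))
  rw [log_rpow hb] at h
  rw [le_div_iff₀ (by positivity)]
  linarith

lemma rpow_mul_abs_log_le_of_one_le {a s m : ℝ} (ha : 1 ≤ a) (hm : 0 < m) :
    a ^ s * |log a| ≤ (exp 1 * m)⁻¹ * a ^ (s + m) := by
  have ha0 : 0 < a := one_pos.trans_le ha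
  rw [abs_of_nonneg (log_nonneg ha), rpow_add ha0]
  calc a ^ s * log a ≤ a ^ s * (a ^ m / (exp 1 * m)) :=
        mul_le_mul_of_nonneg_left (log_le_rpow_div_exp_one_mul ha0.le hm) (by positivity)
    _ = (exp 1 * m)⁻¹ * (a ^ s * a ^ m) := by ring

lemma rpow_mul_abs_log_le_of_le_one {a s : ℝ} (ha0 : 0 ≤ a) (ha1 : a ≤ 1) (hs : 0 < s) :
    a ^ s * |log a| ≤ (exp 1 * s)⁻¹ := by
  rcases ha0.eq_or_lt with rfl | ha0
  · rw [zero_rpow hs.ne', zero_mul]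
    positivity
  rw [abs_of_nonpos (log_nonpos ha0.le ha1), ← log_inv]
  calc a ^ s * log a⁻¹ ≤ a ^ s * (a⁻¹ ^ s / (exp 1 * s)) :=
        mul_le_mul_of_nonneg_left (log_le_rpow_div_exp_one_mul (by positivity) hs)
          (by positivity)
    _ = (a * a⁻¹) ^ s * (exp 1 * s)⁻¹ := by rw [mul_rpow ha0.le (by positivity)]; ring
    _ = (exp 1 * s)⁻¹ := by rw [mul_inv_cancel₀ ha0.ne', one_rpow, one_mul]

lemma rpow_le_rpow_add_rpow_of_le_or_le {x y z r : ℝ} (hx : 0 ≤ x) (hy : 0 ≤ y) (hz : 0 ≤ z)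
    (hr : 0 ≤ r) (h : x ≤ y ∨ x ≤ z) : x ^ r ≤ y ^ r + z ^ r := by
  rcases h with h | h
  · exact (rpow_le_rpow hx h hr).trans (le_add_of_nonneg_right (by positivity))
  · exact (rpow_le_rpow hx h hr).trans (le_add_of_nonneg_left (by positivity))

lemma rpow_mul_abs_log_rpow_le {a s m r : ℝ} (ha : 0 ≤ a) (hs : 0 < s) (hm : 0 < m)
    (hr : 0 ≤ r) :
    (a ^ s * |log a|) ^ r ≤ (exp 1 * m) ^ (-r) * a ^ ((s + m) * r) + (exp 1 * s) ^ (-r) := by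
  have hexp_m : 0 ≤ exp 1 * m := by positivity
  have hexp_s : 0 ≤ exp 1 * s := by positivity
  have h : a ^ s * |log a| ≤ (exp 1 * m)⁻¹ * a ^ (s + m) ∨ a ^ s * |log a| ≤ (exp 1 * s)⁻¹ :=
    (le_total 1 a).imp (rpow_mul_abs_log_le_of_one_le · hm)
      (rpow_mul_abs_log_le_of_le_one ha · hs)
  calc (a ^ s * |log a|) ^ r
      ≤ ((exp 1 * m)⁻¹ * a ^ (s + m)) ^ r + ((exp 1 * s)⁻¹) ^ r :=
        rpow_le_rpow_add_rpow_of_le_or_le (by positivity) (by positivity) (by positivity) hr h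
    _ = (exp 1 * m) ^ (-r) * a ^ ((s + m) * r) + (exp 1 * s) ^ (-r) := by
        rw [mul_rpow (inv_nonneg.mpr hexp_m) (by positivity), inv_rpow hexp_m, ← rpow_neg hexp_m,
          inv_rpow hexp_s, ← rpow_neg hexp_s, rpow_mul ha]

end Real

lemma integrable_and_integral_le_of_le_mul_add_const {Ω : Type*} [MeasurableSpace Ω]
    {μ : Measure Ω} [IsFiniteMeasure μ] {f g : Ω → ℝ} {c d : ℝ}
    (hf : AEStronglyMeasurable f μ) (hg : Integrable g μ) (hf0 : ∀ x, 0 ≤ f x)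
    (hfg : ∀ x, f x ≤ c * g x + d) :
    Integrable f μ ∧ ∫ x, f x ∂μ ≤ c * ∫ x, g x ∂μ + d * μ.real Set.univ := by
  have hbound : Integrable (fun x ↦ c * g x + d) μ := (hg.const_mul c).add (integrable_const d)
  have hfint : Integrable f μ :=
    hbound.mono' hf (.of_forall fun x ↦ (Real.norm_of_nonneg (hf0 x)).trans_le (hfg x))
  refine ⟨hfint, (integral_mono hfint hbound hfg).trans_eq ?_⟩
  rw [integral_add (hg.const_mul c) (integrable_const d), integral_const_mul, integral_const,
    smul_eq_mul, mul_comm d]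

theorem log_nonlinearity_dual_estimate {Ω : Type*} [MeasurableSpace Ω] (μ : Measure Ω)
    [IsFiniteMeasure μ] (q m : ℝ) (hq : 1 < q) (hm : 0 < m) (u : Ω → ℝ)
    (hu : Measurable u)
    (hint : Integrable (fun x => |u x| ^ ((q - 1 + m) * q / (q - 1))) μ) :
    Integrable (fun x => (|u x| ^ (q - 1) * abs (Real.log |u x|)) ^ (q / (q - 1))) μ ∧
      ∫ x, (|u x| ^ (q - 1) * abs (Real.log |u x|)) ^ (q / (q - 1)) ∂μ ≤
        (Real.exp 1 * m) ^ (-(q / (q - 1))) *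
            ∫ x, |u x| ^ ((q - 1 + m) * q / (q - 1)) ∂μ +
          (Real.exp 1 * (q - 1)) ^ (-(q / (q - 1))) * (μ Set.univ).toReal := by
  have hmeas : Measurable fun x ↦ (|u x| ^ (q - 1) * abs (Real.log |u x|)) ^ (q / (q - 1)) := by
    fun_prop
  refine integrable_and_integral_le_of_le_mul_add_const hmeas.aestronglyMeasurable hint
    (fun x ↦ by positivity) fun x ↦ ?_
  rw [mul_div_assoc]
  exact Real.rpow_mul_abs_log_rpow_le (abs_nonneg _) (sub_pos.mpr hq) hm (by positivity)
end
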